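/- arXiv:2010.14424 — 2 statements merged into one kernel-verified Lean document; each statement's English description precedes it below -/
import Mathlib

section
/- Assume ρ_f < α < 1 with α ≠ 1 − ρ_f, and 1/2 < β < 1. Suppose that for every ε > 0, (ρ_ε, J_ε) is a classical solution of the area-averaged pedestrian boundary value problem on [0,1] with diffusion ε. Then for every fixed x ∈ (0,1), ρ_ε(x) → (1/2)·(1 + √(1 − k(1)/k(x))) as ε → 0⁺. -/
/-!
For small `ε` the equation `ε ρ' = ρ (1 - ρ) - J / k(x)` is a slow–fast system whose critical
manifold `ρ (1 - ρ) = J / k(x)` consists of an attracting upper branch and a repelling lower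
branch. The current is squeezed to `J → k(1)/4`: were it larger, the drift would be negative
near `x = 1`, where `k ≈ k(1)`, and `ρ` would turn negative before the outflow; were it smaller,
the branches would stay apart on all of `[0, 1]`, `ρ` would follow the upper branch up to
`x = 1`, and `β > 1/2` would make the outflow current exceed `k(1)/4`. Since `ρ_f < α`, the
inflow condition puts `ρ(0)` above the repelling branch, so on `[0, x]`, where `k > k(1)` keeps
the branches apart, `ρ` tracks the upper branch, which tends to `(1 + √(1 - k(1)/k(x)))/2`.
Tracking is proved step by step, on intervals short enough for the branches to barely move but
long compared with `ε`.
-/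

open Set Filter

/-- A classical solution `(ρ, J)` (with derivative `ρ'`) of the area-averaged pedestrian
boundary value problem on `[0, L]` with diffusion `ε`, inflow rate `α`, outflow rate `β`
and width function `k`. -/
def IsClassicalSolution (L ε α β : ℝ) (k ρ ρ' : ℝ → ℝ) (J : ℝ) : Prop :=
  (∀ x ∈ Icc (0:ℝ) L, HasDerivWithinAt ρ (ρ' x) (Icc 0 L) x) ∧
  ContinuousOn ρ' (Icc 0 L) ∧
  (∀ x ∈ Icc (0:ℝ) L, k x * (-ε * ρ' x + ρ x * (1 - ρ x)) = J) ∧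
  -ε * ρ' 0 + ρ 0 * (1 - ρ 0) = α * (1 - ρ 0) ∧
  -ε * ρ' L + ρ L * (1 - ρ L) = β * ρ L

/-- `ρ_f = (1/2)·(1 − √(1 − k(1)/k(0)))`. -/
noncomputable def rhoF (k : ℝ → ℝ) : ℝ := (1/2) * (1 - Real.sqrt (1 - k 1 / k 0))

/-- `ρ*(α) = (1/2)·(1 − √(1 − 4α(1−α)·k(0)/k(1)))`. -/
noncomputable def rhoStar (α : ℝ) (k : ℝ → ℝ) : ℝ :=
  (1/2) * (1 - Real.sqrt (1 - 4*α*(1-α) * k 0 / k 1))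

/-- `ρ_*(β) = (1/2)·(1 + √(1 − 4β(1−β)·k(1)/k(0)))`. -/
noncomputable def rhoStarLow (β : ℝ) (k : ℝ → ℝ) : ℝ :=
  (1/2) * (1 + Real.sqrt (1 - 4*β*(1-β) * k 1 / k 0))

open scoped Topology

section Comparison

variable {f f' : ℝ → ℝ} {a b c m : ℝ}

theorem const_le_of_deriv_pos_of_eq (hf : ContinuousOn f (Icc a b))
    (hf' : ∀ x ∈ Ico a b, HasDerivWithinAt f (f' x) (Ici x) x) (ha : c ≤ f a)
    (hc : ∀ x ∈ Ico a b, f x = c → 0 < f' x) : ∀ x ∈ Icc a b, c ≤ f x :=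
  fun _ hx => image_le_of_deriv_right_lt_deriv_boundary' continuousOn_const
    (fun x _ => hasDerivWithinAt_const x _ c) ha hf hf' (fun x hx hfx => hc x hx hfx.symm) hx

theorem le_const_of_deriv_neg_of_eq (hf : ContinuousOn f (Icc a b))
    (hf' : ∀ x ∈ Ico a b, HasDerivWithinAt f (f' x) (Ici x) x) (ha : f a ≤ c)
    (hc : ∀ x ∈ Ico a b, f x = c → f' x < 0) : ∀ x ∈ Icc a b, f x ≤ c :=
  fun _ hx => image_le_of_deriv_right_lt_deriv_boundary' hf hf' ha continuousOn_const
    (fun x _ => hasDerivWithinAt_const x _ c) hc hx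

/-- Once `f` reaches `c` it stays above it, because `f' ≥ m > 0` at the level `c`. -/
theorem const_le_of_le_deriv_of_le (hf : ContinuousOn f (Icc a b))
    (hf' : ∀ x ∈ Ico a b, HasDerivWithinAt f (f' x) (Ici x) x) (hab : a ≤ b) (hm : 0 < m)
    (ha : c - m * (b - a) ≤ f a) (hc : ∀ x ∈ Ico a b, f x ≤ c → m ≤ f' x) : c ≤ f b := by
  by_contra! hb
  have hbelow : ∀ x ∈ Icc a b, f x < c := by
    intro x hx
    by_contra! hx'
    have := const_le_of_deriv_pos_of_eq (hf.mono (Icc_subset_Icc_left hx.1))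
      (fun y hy => hf' y ⟨hx.1.trans hy.1, hy.2⟩) hx'
      (fun y hy hy' => hm.trans_le (hc y ⟨hx.1.trans hy.1, hy.2⟩ hy'.le)) b ⟨hx.2, le_rfl⟩
    linarith
  have hgrowth := image_le_of_deriv_right_le_deriv_boundary (f := fun x => f a + m * (x - a))
    (by fun_prop) (fun x _ => ((hasDerivAt_id x).sub_const a).const_mul m |>.const_add (f a)
      |>.hasDerivWithinAt |>.congr_deriv (mul_one m)) (by simp) hf hf'
    (fun x hx => hc x hx (hbelow x (Ico_subset_Icc_self hx)).le) ⟨hab, le_rfl⟩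
  linarith

theorem le_const_of_deriv_le_of_le (hf : ContinuousOn f (Icc a b))
    (hf' : ∀ x ∈ Ico a b, HasDerivWithinAt f (f' x) (Ici x) x) (hab : a ≤ b) (hm : 0 < m)
    (ha : f a ≤ c + m * (b - a)) (hc : ∀ x ∈ Ico a b, c ≤ f x → f' x ≤ -m) : f b ≤ c := by
  have := const_le_of_le_deriv_of_le (f := fun x => -f x) (c := -c) hf.neg
    (fun x hx => (hf' x hx).neg) hab hm (by linarith)
    (fun x hx hx' => le_neg.2 (hc x hx (neg_le_neg_iff.1 hx')))
  linarith

end Comparison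

/-- `P` and `1 - P` are the attracting and the repelling branch of the critical manifold of
`ε R' = (P - R) (R - (1 - P))`. -/
structure SolvesBranchODE (ε : ℝ) (P R R' : ℝ → ℝ) (a b : ℝ) : Prop where
  continuousOn : ContinuousOn R (Icc a b)
  hasDerivWithinAt : ∀ x ∈ Ico a b, HasDerivWithinAt R (R' x) (Ici x) x
  ode : ∀ x ∈ Ico a b, ε * R' x = (P x - R x) * (R x - (1 - P x))

namespace SolvesBranchODE

variable {ε e a b h₀ : ℝ} {P R R' : ℝ → ℝ}

theorem mono (h : SolvesBranchODE ε P R R' a b) {s t : ℝ} (hs : a ≤ s) (ht : t ≤ b) :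
    SolvesBranchODE ε P R R' s t where
  continuousOn := h.continuousOn.mono (Icc_subset_Icc hs ht)
  hasDerivWithinAt x hx := h.hasDerivWithinAt x (Ico_subset_Ico hs ht hx)
  ode x hx := h.ode x (Ico_subset_Ico hs ht hx)

theorem deriv_eq (h : SolvesBranchODE ε P R R' a b) (hε : 0 < ε) {x : ℝ} (hx : x ∈ Ico a b) :
    R' x = (P x - R x) * (R x - (1 - P x)) / ε := by
  rw [← h.ode x hx, mul_div_cancel_left₀ _ hε.ne']

/-- `R` cannot fall back to the repelling branch `1 - P`, and between the branches it rises at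
rate at least `e ^ 2 / (16 ε)`. -/
theorem sub_le_of_step (h : SolvesBranchODE ε P R R' a b) (hε : 0 < ε) (he : 0 < e)
    (hab : a ≤ b) (hosc : ∀ x ∈ Icc a b, |P x - P b| ≤ e / 4) (hgap : 2 * e ≤ 2 * P b - 1)
    (hP : P b ≤ 1) (hlen : 16 * ε ≤ e ^ 2 * (b - a)) (ha : 1 - P a + e ≤ R a) :
    P b - e / 2 ≤ R b := by
  have hosc' : ∀ x ∈ Ico a b, |P x - P b| ≤ e / 4 := fun x hx => hosc x (Ico_subset_Icc_self hx)
  have habove : ∀ x ∈ Icc a b, 1 - P b + e / 2 ≤ R x := by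
    refine const_le_of_deriv_pos_of_eq h.continuousOn h.hasDerivWithinAt ?_ fun x hx hRx => ?_
    · linarith [(abs_le.1 (hosc a (left_mem_Icc.2 hab))).2]
    · obtain ⟨h₁, h₂⟩ := abs_le.1 (hosc' x hx)
      rw [h.deriv_eq hε hx]
      exact div_pos (mul_pos (by linarith) (by linarith)) hε
  refine const_le_of_le_deriv_of_le h.continuousOn h.hasDerivWithinAt hab
    (m := e ^ 2 / 16 / ε) (by positivity) ?_ fun x hx hRx => ?_
  · have hrise : 1 ≤ e ^ 2 / 16 / ε * (b - a) := by
      rw [div_mul_eq_mul_div, le_div_iff₀ hε]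
      linarith
    linarith [habove a (left_mem_Icc.2 hab)]
  · obtain ⟨h₁, h₂⟩ := abs_le.1 (hosc' x hx)
    have := habove x (Ico_subset_Icc_self hx)
    rw [h.deriv_eq hε hx]
    gcongr
    calc e ^ 2 / 16 = (e / 4) * (e / 4) := by ring
      _ ≤ _ := mul_le_mul (by linarith) (by linarith) (by positivity) (by linarith)

theorem le_add_of_step (h : SolvesBranchODE ε P R R' a b) (hε : 0 < ε) (he : 0 < e)
    (hab : a ≤ b) (hosc : ∀ x ∈ Icc a b, |P x - P a| ≤ e / 4) (hP : 1 / 2 ≤ P a)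
    (hlen : 16 * ε ≤ e ^ 2 * (b - a)) (ha : R a ≤ 1) : R b ≤ P b + e := by
  have hdrop : R b ≤ P a + e / 2 := by
    refine le_const_of_deriv_le_of_le h.continuousOn h.hasDerivWithinAt hab
      (m := e ^ 2 / 16 / ε) (by positivity) ?_ fun x hx hRx => ?_
    · have hrise : 1 ≤ e ^ 2 / 16 / ε * (b - a) := by
        rw [div_mul_eq_mul_div, le_div_iff₀ hε]
        linarith
      linarith
    · obtain ⟨h₁, h₂⟩ := abs_le.1 (hosc x (Ico_subset_Icc_self hx))
      rw [h.deriv_eq hε hx, ← neg_div]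
      gcongr
      calc (P x - R x) * (R x - (1 - P x)) ≤ -(e / 4) * (R x - (1 - P x)) :=
            mul_le_mul_of_nonneg_right (by linarith) (by linarith)
        _ ≤ -(e / 4) * (e / 4) := mul_le_mul_of_nonpos_left (by linarith) (by linarith)
        _ = -(e ^ 2 / 16) := by ring
  linarith [(abs_le.1 (hosc b (right_mem_Icc.2 hab))).1]

theorem sub_le_of_steps (h : SolvesBranchODE ε P R R' a b) (hε : 0 < ε) (he : 0 < e)
    (hh₀ : 0 < h₀) (hosc : ∀ x ∈ Icc a b, ∀ y ∈ Icc a b, |x - y| ≤ 2 * h₀ → |P x - P y| ≤ e / 4)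
    (hgap : ∀ x ∈ Icc a b, 2 * e ≤ 2 * P x - 1) (hP : ∀ x ∈ Icc a b, P x ≤ 1)
    (hlen : 16 * ε ≤ e ^ 2 * h₀) (ha : 1 - P a + e ≤ R a) :
    ∀ x ∈ Icc (a + h₀) b, P x - e / 2 ≤ R x := by
  have hstep : ∀ s ∈ Icc a b, ∀ x ∈ Icc a b, h₀ ≤ x - s → x - s ≤ 2 * h₀ →
      1 - P s + e ≤ R s → P x - e / 2 ≤ R x := by
    intro s hs x hx h₁ h₂ hRs
    refine (h.mono hs.1 hx.2).sub_le_of_step hε he (by linarith)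
      (fun y hy => hosc y (Icc_subset_Icc hs.1 hx.2 hy) x hx ?_) (hgap x hx) (hP x hx) ?_ hRs
    · rw [abs_of_nonpos (by linarith [hy.2])]
      linarith [hy.1]
    · nlinarith
  have hsteps : ∀ n : ℕ, ∀ x ∈ Icc (a + h₀) b, x ≤ a + n * h₀ → P x - e / 2 ≤ R x := by
    intro n
    induction n with
    | zero =>
      intro x hx hxn
      simp only [CharP.cast_eq_zero, zero_mul, add_zero] at hxn
      linarith [hx.1]
    | succ n ih =>
      intro x hx hxn
      have hxab : x ∈ Icc a b := ⟨by linarith [hx.1], hx.2⟩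
      rcases le_or_gt x (a + 2 * h₀) with hx₂ | hx₂
      · exact hstep a ⟨le_rfl, by linarith [hx.1, hx.2]⟩ x hxab (by linarith [hx.1])
          (by linarith) ha
      · have hs : x - h₀ ∈ Icc (a + h₀) b := ⟨by linarith, by linarith [hx.2]⟩
        have hsab : x - h₀ ∈ Icc a b := ⟨by linarith [hs.1], hs.2⟩
        have hRs := ih (x - h₀) hs (by push_cast at hxn; linarith)
        exact hstep (x - h₀) hsab x hxab (by linarith) (by linarith)
          (by linarith [hgap (x - h₀) hsab])
  intro x hx
  obtain ⟨n, hn⟩ := exists_nat_ge ((x - a) / h₀)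
  exact hsteps n x hx (by rw [div_le_iff₀ hh₀] at hn; linarith)

theorem abs_sub_le (h : SolvesBranchODE ε P R R' a b) (hε : 0 < ε) (he : 0 < e)
    (hh₀ : 0 < h₀) (hab : h₀ ≤ b - a)
    (hosc : ∀ x ∈ Icc a b, ∀ y ∈ Icc a b, |x - y| ≤ 2 * h₀ → |P x - P y| ≤ e / 4)
    (hgap : ∀ x ∈ Icc a b, 2 * e ≤ 2 * P x - 1) (hP : ∀ x ∈ Icc a b, P x ≤ 1)
    (hR : ∀ x ∈ Icc a b, R x ≤ 1) (hlen : 16 * ε ≤ e ^ 2 * h₀) (ha : 1 - P a + e ≤ R a) :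
    |R b - P b| ≤ e := by
  have hs : b - h₀ ∈ Icc a b := ⟨by linarith, by linarith⟩
  have hlower := h.sub_le_of_steps hε he hh₀ hosc hgap hP hlen ha b ⟨by linarith, le_rfl⟩
  have hupper := (h.mono hs.1 le_rfl).le_add_of_step hε he (by linarith)
    (fun y hy => hosc y (Icc_subset_Icc_left hs.1 hy) _ hs (by
      rw [abs_of_nonneg (by linarith [hy.1])]
      linarith [hy.2]))
    (by linarith [hgap _ hs]) (by rw [sub_sub_cancel]; exact hlen) (hR _ hs)
  exact abs_le.2 ⟨by linarith, by linarith⟩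

end SolvesBranchODE

/-- The larger root of `r (1 - r) = J / c`. -/
noncomputable def upperBranch (J c : ℝ) : ℝ := (1 + √(1 - 4 * J / c)) / 2

section UpperBranch

variable {J c : ℝ}

theorem two_mul_upperBranch_sub_one : 2 * upperBranch J c - 1 = √(1 - 4 * J / c) := by
  unfold upperBranch
  ring

theorem half_le_upperBranch : 1 / 2 ≤ upperBranch J c := by
  linarith [two_mul_upperBranch_sub_one (J := J) (c := c), Real.sqrt_nonneg (1 - 4 * J / c)]

theorem upperBranch_le_one (h : 0 ≤ J / c) : upperBranch J c ≤ 1 := by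
  have : √(1 - 4 * J / c) ≤ 1 := Real.sqrt_le_one.2 (by rw [mul_div_assoc]; linarith)
  linarith [two_mul_upperBranch_sub_one (J := J) (c := c)]

theorem mul_one_sub_sub_div_eq (h : 4 * J / c ≤ 1) (r : ℝ) :
    r * (1 - r) - J / c = (upperBranch J c - r) * (r - (1 - upperBranch J c)) := by
  have hsq := Real.sq_sqrt (sub_nonneg.2 h)
  have hJc : J / c = (1 - √(1 - 4 * J / c) ^ 2) / 4 := by rw [hsq, mul_div_assoc]; ring
  rw [hJc, upperBranch]
  ring

theorem exists_abs_upperBranch_sub_le {k : ℝ → ℝ} {s T : Set ℝ} (hs : IsCompact s)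
    (hT : IsCompact T) (hkc : ContinuousOn k s) (hk : ∀ x ∈ s, k x ≠ 0) {e : ℝ} (he : 0 < e) :
    ∃ h > 0, ∀ J ∈ T, ∀ x ∈ s, ∀ y ∈ s, |x - y| ≤ h →
      |upperBranch J (k x) - upperBranch J (k y)| ≤ e := by
  have hcont : ContinuousOn (fun p : ℝ × ℝ => upperBranch p.1 (k p.2)) (T ×ˢ s) :=
    (continuousOn_const.add (Real.continuous_sqrt.comp_continuousOn (continuousOn_const.sub
      ((continuousOn_const.mul continuousOn_fst).div (hkc.comp continuousOn_snd fun p hp => hp.2)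
        fun p hp => hk p.2 hp.2)))).div_const 2
  obtain ⟨h, hh, hunif⟩ := Metric.uniformContinuousOn_iff_le.1
    ((hT.prod hs).uniformContinuousOn_of_continuous hcont) e he
  refine ⟨h, hh, fun J hJ x hx y hy hxy => ?_⟩
  simpa [Real.dist_eq] using hunif (J, x) ⟨hJ, hx⟩ (J, y) ⟨hJ, hy⟩ (by simpa [Real.dist_eq])

theorem continuous_upperBranch (c : ℝ) : Continuous fun J => upperBranch J c := by
  unfold upperBranch
  fun_prop

end UpperBranch

namespace IsClassicalSolution

variable {L ε α β J : ℝ} {k R R' : ℝ → ℝ}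

theorem continuousOn (h : IsClassicalSolution L ε α β k R R' J) : ContinuousOn R (Icc 0 L) :=
  fun x hx => (h.1 x hx).continuousWithinAt

theorem hasDerivWithinAt_Ici (h : IsClassicalSolution L ε α β k R R' J) :
    ∀ x ∈ Ico 0 L, HasDerivWithinAt R (R' x) (Ici x) x :=
  fun x hx => (h.1 x (Ico_subset_Icc_self hx)).mono_of_mem_nhdsWithin (Icc_mem_nhdsGE_of_mem hx)

theorem deriv_eq (h : IsClassicalSolution L ε α β k R R' J) (hε : 0 < ε) {x : ℝ}
    (hx : x ∈ Icc 0 L) (hkx : k x ≠ 0) : R' x = (R x * (1 - R x) - J / k x) / ε := by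
  rw [eq_div_iff hε.ne', ← h.2.2.1 x hx, mul_div_cancel_left₀ _ hkx]
  ring

theorem current_eq_left (h : IsClassicalSolution L ε α β k R R' J) (hL : 0 ≤ L) :
    J = k 0 * (α * (1 - R 0)) := by
  rw [← h.2.2.1 0 ⟨le_rfl, hL⟩, h.2.2.2.1]

theorem current_eq_right (h : IsClassicalSolution L ε α β k R R' J) (hL : 0 ≤ L) :
    J = k L * (β * R L) := by
  rw [← h.2.2.1 L ⟨hL, le_rfl⟩, h.2.2.2.2]

/-- If `J ≤ 0` then `R 0 ≥ 1`, and `R` cannot cross `1/2` downwards, where the drift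
`R (1 - R) - J / k` is at least `1/4`; this contradicts `J = k L β R L`. -/
theorem current_pos (h : IsClassicalSolution L ε α β k R R' J) (hL : 0 ≤ L) (hε : 0 < ε)
    (hk : ∀ x ∈ Icc 0 L, 0 < k x) (hα : 0 < α) (hβ : 0 < β) : 0 < J := by
  have hk0 := hk 0 ⟨le_rfl, hL⟩
  by_contra! hJ
  have hR0 : 1 ≤ R 0 := by
    by_contra! hR0
    have : 0 < k 0 * (α * (1 - R 0)) := by have := sub_pos.2 hR0; positivity
    linarith [h.current_eq_left hL]
  have hhalf := const_le_of_deriv_pos_of_eq (c := 1 / 2) h.continuousOn h.hasDerivWithinAt_Ici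
    (by linarith) fun x hx hRx => by
      have hkx := hk x (Ico_subset_Icc_self hx)
      rw [h.deriv_eq hε (Ico_subset_Icc_self hx) hkx.ne', hRx]
      exact div_pos (by linarith [div_nonpos_of_nonpos_of_nonneg hJ hkx.le]) hε
  have := hhalf L ⟨hL, le_rfl⟩
  have : 0 < k L * (β * R L) := by have := hk L ⟨hL, le_rfl⟩; positivity
  linarith [h.current_eq_right hL]

theorem le_one (h : IsClassicalSolution L ε α β k R R' J) (hL : 0 ≤ L) (hε : 0 < ε)
    (hk : ∀ x ∈ Icc 0 L, 0 < k x) (hα : 0 < α) (hβ : 0 < β) : ∀ x ∈ Icc 0 L, R x ≤ 1 := by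
  have hJ := h.current_pos hL hε hk hα hβ
  have hR0 : R 0 < 1 := by
    have := h.current_eq_left hL ▸ hJ
    have : 0 < α * (1 - R 0) := pos_of_mul_pos_right this (hk 0 ⟨le_rfl, hL⟩).le
    have : 0 < 1 - R 0 := pos_of_mul_pos_right this hα.le
    linarith
  refine le_const_of_deriv_neg_of_eq h.continuousOn h.hasDerivWithinAt_Ici hR0.le
    fun x hx hRx => ?_
  have hkx := hk x (Ico_subset_Icc_self hx)
  rw [h.deriv_eq hε (Ico_subset_Icc_self hx) hkx.ne', hRx]
  exact div_neg_of_neg_of_pos (by linarith [div_pos hJ hkx]) hε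

theorem solvesBranchODE (h : IsClassicalSolution L ε α β k R R' J) (hε : 0 < ε)
    (hk : ∀ x ∈ Icc 0 L, 0 < k x) {b : ℝ} (hb : b ≤ L)
    (hJ : ∀ x ∈ Icc 0 b, 4 * J / k x ≤ 1) :
    SolvesBranchODE ε (fun x => upperBranch J (k x)) R R' 0 b where
  continuousOn := h.continuousOn.mono (Icc_subset_Icc_right hb)
  hasDerivWithinAt x hx := h.hasDerivWithinAt_Ici x (Ico_subset_Ico_right hb hx)
  ode x hx := by
    have hxL : x ∈ Icc 0 L := Icc_subset_Icc_right hb (Ico_subset_Icc_self hx)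
    rw [h.deriv_eq hε hxL (hk x hxL).ne', mul_div_cancel₀ _ hε.ne',
      mul_one_sub_sub_div_eq (hJ x (Ico_subset_Icc_self hx))]

end IsClassicalSolution

theorem pos_of_rhoF_lt {k : ℝ → ℝ} {α : ℝ} (hk : ∀ x ∈ Icc (0 : ℝ) 1, 0 < k x)
    (hα : rhoF k < α) : 0 < α := by
  have := div_pos (hk 1 ⟨zero_le_one, le_rfl⟩) (hk 0 ⟨le_rfl, zero_le_one⟩)
  have : √(1 - k 1 / k 0) ≤ 1 := Real.sqrt_le_one.2 (by linarith)
  unfold rhoF at hα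
  linarith

/-- Writing `s = √(1 - 4J/k₀)`, the inflow condition `J = k₀ α (1 - ρ₀)` puts `ρ₀` at distance
`(1 + s) (s - (1 - 2α)) / (4α)` above the repelling branch, and `s` stays above `1 - 2α` for `J`
near `k₁ / 4` because `s = √(1 - k₁/k₀)` there. -/
theorem exists_entry_margin {k₀ k₁ α : ℝ} (hk₁ : 0 < k₁) (hk₁₀ : k₁ < k₀)
    (hα : (1 / 2) * (1 - √(1 - k₁ / k₀)) < α) :
    ∃ c > 0, ∃ Jm > k₁ / 4, ∀ J ρ₀, 0 ≤ J → J ≤ Jm → J = k₀ * (α * (1 - ρ₀)) →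
      1 - upperBranch J k₀ + c ≤ ρ₀ := by
  have hk₀ : 0 < k₀ := hk₁.trans hk₁₀
  have hratio : 0 < 1 - k₁ / k₀ := sub_pos.2 ((div_lt_one hk₀).2 hk₁₀)
  set sf := √(1 - k₁ / k₀)
  have hsf2 : sf ^ 2 = 1 - k₁ / k₀ := Real.sq_sqrt hratio.le
  have hα₀ : 0 < α := by
    have : sf ≤ 1 := Real.sqrt_le_one.2 (by linarith [div_pos hk₁ hk₀])
    linarith
  obtain ⟨sm, hsm, hsmf⟩ := exists_between (max_lt (Real.sqrt_pos.2 hratio)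
    (show 1 - 2 * α < sf by linarith))
  obtain ⟨hsm₀, hsmα⟩ := max_lt_iff.1 hsm
  refine ⟨(sm - (1 - 2 * α)) / (4 * α), div_pos (by linarith) (by positivity),
    k₀ * (1 - sm ^ 2) / 4, ?_, fun J ρ₀ hJ hJm hJρ => ?_⟩
  · have : k₁ = k₀ * (1 - sf ^ 2) := by rw [hsf2]; field_simp; ring
    rw [this]
    gcongr
  set s := √(1 - 4 * J / k₀) with hs
  have harg : sm ^ 2 ≤ 1 - 4 * J / k₀ := by
    rw [le_sub_comm, div_le_iff₀ hk₀]
    linarith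
  have hs2 : s ^ 2 = 1 - 4 * J / k₀ := Real.sq_sqrt (le_trans (sq_nonneg sm) harg)
  have hsms : sm ≤ s := Real.le_sqrt_of_sq_le harg
  have hρ₀ : 4 * (α * (1 - ρ₀)) = 1 - s ^ 2 := by
    rw [hs2, hJρ]
    field_simp
    ring
  have hs₀ : 0 ≤ s := Real.sqrt_nonneg _
  have hmargin : ρ₀ - (1 - upperBranch J k₀ + (sm - (1 - 2 * α)) / (4 * α)) =
      (s * (s + 2 * α - 1) + (s - sm)) / (4 * α) := by
    rw [upperBranch, ← hs]
    field_simp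
    linear_combination (-2) * hρ₀
  rw [← sub_nonneg, hmargin]
  exact div_nonneg (add_nonneg (mul_nonneg hs₀ (by linarith)) (by linarith)) (by positivity)

theorem eventually_abs_sub_upperBranch_le {α β : ℝ} {k : ℝ → ℝ} (hkc : ContinuousOn k (Icc 0 1))
    (hk : ∀ x ∈ Icc (0 : ℝ) 1, 0 < k x) (hkanti : AntitoneOn k (Icc 0 1)) (hα : 0 < α)
    (hβ : 0 < β) {x₁ g c e : ℝ} (hx₁ : x₁ ∈ Ioc 0 1) (hg : 0 < g) (hc : 0 < c) (he : 0 < e) :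
    ∀ᶠ ε in 𝓝[>] 0, ∀ R R' J, IsClassicalSolution 1 ε α β k R R' J →
      4 * J ≤ (1 - g) * k x₁ → 1 - upperBranch J (k 0) + c ≤ R 0 →
      |R x₁ - upperBranch J (k x₁)| ≤ e := by
  set e' := min (min e c) (√g / 2)
  have he' : 0 < e' := lt_min (lt_min he hc) (by positivity)
  obtain ⟨h, hh, hosc⟩ := exists_abs_upperBranch_sub_le isCompact_Icc (isCompact_Icc (a := 0)
    (b := k 0)) hkc (fun x hx => (hk x hx).ne') (div_pos he' four_pos)
  set h₀ := min (h / 2) x₁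
  have hh₀ : 0 < h₀ := lt_min (by positivity) hx₁.1
  filter_upwards [Ioo_mem_nhdsGT (show 0 < e' ^ 2 * h₀ / 16 by positivity)]
    with ε hε R R' J hsol hJ hR₀
  have hJ₀ : 0 < J := hsol.current_pos zero_le_one hε.1 hk hα hβ
  have hsub : Icc 0 x₁ ⊆ Icc 0 1 := Icc_subset_Icc_right hx₁.2
  have hkx₁ := hk x₁ (hsub ⟨hx₁.1.le, le_rfl⟩)
  have hg₁ : 0 < 1 - g := pos_of_mul_pos_left (by linarith) hkx₁.le
  have hgap : ∀ x ∈ Icc 0 x₁, g ≤ 1 - 4 * J / k x := by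
    intro x hx
    have : k x₁ ≤ k x := hkanti (hsub hx) (hsub ⟨hx₁.1.le, le_rfl⟩) hx.2
    rw [le_sub_comm, div_le_iff₀ (hk x (hsub hx))]
    nlinarith
  have hJm : J ∈ Icc 0 (k 0) := by
    have : k x₁ ≤ k 0 := hkanti ⟨le_rfl, zero_le_one⟩ (hsub ⟨hx₁.1.le, le_rfl⟩) hx₁.1.le
    constructor <;> nlinarith
  have htrack := (hsol.solvesBranchODE hε.1 hk hx₁.2 fun x hx => by linarith [hgap x hx])
    |>.abs_sub_le hε.1 he' hh₀ (by simp [h₀])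
      (fun x hx y hy hxy => hosc J hJm x (hsub hx) y (hsub hy)
        (by linarith [min_le_left (h / 2) x₁]))
      (fun x hx => by
        rw [two_mul_upperBranch_sub_one]
        calc 2 * e' ≤ √g := by linarith [min_le_right (min e c) (√g / 2)]
          _ ≤ _ := Real.sqrt_le_sqrt (hgap x hx))
      (fun x hx => upperBranch_le_one (div_nonneg hJ₀.le (hk x (hsub hx)).le))
      (fun x hx => hsol.le_one zero_le_one hε.1 hk hα hβ x (hsub hx))
      (by linarith [hε.2])
      (by linarith [min_le_right e c, min_le_left (min e c) (√g / 2)])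
  exact htrack.trans ((min_le_left _ _).trans (min_le_left _ _))

section Family

variable {α β : ℝ} {k : ℝ → ℝ} {ρ ρ' : ℝ → ℝ → ℝ} {J : ℝ → ℝ}

/-- If `J > k(1)/4 + δ` then, since `k ≈ k(1)` near `x = 1`, the drift `ρ (1 - ρ) - J / k` is
negative there uniformly, and `ρ` would drop below `0` before `x = 1`. -/
theorem eventually_current_le (hkc₁ : ContinuousWithinAt k (Icc 0 1) 1)
    (hk : ∀ x ∈ Icc (0 : ℝ) 1, 0 < k x) (hα : 0 < α) (hβ : 0 < β)
    (hsol : ∀ ε > 0, IsClassicalSolution 1 ε α β k (ρ ε) (ρ' ε) (J ε)) {δ : ℝ} (hδ : 0 < δ) :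
    ∀ᶠ ε in 𝓝[>] 0, J ε ≤ k 1 / 4 + δ := by
  obtain ⟨η, hη, hkη⟩ := Metric.continuousWithinAt_iff.1 hkc₁ δ hδ
  set a := max 0 (1 - η / 2)
  have ha : a < 1 := max_lt zero_lt_one (by linarith)
  have hk₁ := hk 1 ⟨zero_le_one, le_rfl⟩
  set μ := δ / (2 * (k 1 + δ))
  have hμ : 0 < μ := by positivity
  filter_upwards [Ioo_mem_nhdsGT (show 0 < μ * (1 - a) by nlinarith)] with ε hε
  by_contra! hJ
  have hε₀ := hε.1
  have hsolε := hsol ε hε₀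
  have hsub : Icc a 1 ⊆ Icc 0 1 := Icc_subset_Icc_left (le_max_left _ _)
  have hρ₁ : ρ ε 1 ≤ 0 := by
    refine le_const_of_deriv_le_of_le (hsolε.continuousOn.mono hsub)
      (fun x hx => hsolε.hasDerivWithinAt_Ici x ⟨(le_max_left _ _).trans hx.1, hx.2⟩) ha.le
      (m := μ / ε) (div_pos hμ hε₀) ?_ fun x hx _ => ?_
    · have : 1 ≤ μ / ε * (1 - a) := by
        rw [div_mul_eq_mul_div, le_div_iff₀ hε₀]
        linarith [hε.2]
      linarith [hsolε.le_one zero_le_one hε₀ hk hα hβ a (hsub ⟨le_rfl, ha.le⟩)]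
    · have hx' := hsub (Ico_subset_Icc_self hx)
      have hkx := hk x hx'
      have hkxδ : k x ≤ k 1 + δ := by
        have hdist : dist x 1 < η := by
          rw [Real.dist_eq, abs_of_nonpos (by linarith [hx.2])]
          linarith [hx.1, le_max_right 0 (1 - η / 2)]
        have := hkη hx' hdist
        rw [Real.dist_eq] at this
        linarith [(abs_lt.1 this).2]
      have hdrift : 1 / 4 + μ ≤ J ε / k x := by
        rw [le_div_iff₀ hkx]
        have : (k 1 + δ) * μ = δ / 2 := by simp only [μ]; field_simp
        nlinarith
      rw [hsolε.deriv_eq hε₀ hx' hkx.ne', ← neg_div]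
      gcongr
      nlinarith [sq_nonneg (ρ ε x - 1 / 2)]
  have hJ₁ := hsolε.current_eq_right zero_le_one
  nlinarith [mul_nonneg hk₁.le (mul_nonneg hβ.le (neg_nonneg.2 hρ₁))]

/-- If `J < k(1)/4 - δ`, the critical manifold has no fold on `[0, 1]`, so `ρ` tracks the upper
branch up to `x = 1`; then `ρ(1) ≳ 1/2` and the outflow condition forces `J ≥ β k(1)/2 > k(1)/4`. -/
theorem eventually_le_current (hkc : ContinuousOn k (Icc 0 1))
    (hk : ∀ x ∈ Icc (0 : ℝ) 1, 0 < k x) (hkanti : StrictAntiOn k (Icc 0 1)) (hα : rhoF k < α)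
    (hβ : 1 / 2 < β) (hsol : ∀ ε > 0, IsClassicalSolution 1 ε α β k (ρ ε) (ρ' ε) (J ε))
    {δ : ℝ} (hδ : 0 < δ) : ∀ᶠ ε in 𝓝[>] 0, k 1 / 4 - δ ≤ J ε := by
  have hk₁ := hk 1 ⟨zero_le_one, le_rfl⟩
  have hk₁₀ : k 1 < k 0 := hkanti ⟨le_rfl, zero_le_one⟩ ⟨zero_le_one, le_rfl⟩ zero_lt_one
  have hα₀ : 0 < α := pos_of_rhoF_lt hk hα
  obtain ⟨c, hc, Jm, hJm, hentry⟩ := exists_entry_margin hk₁ hk₁₀ hα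
  set e := (2 * β - 1) / (4 * β)
  filter_upwards [eventually_abs_sub_upperBranch_le hkc hk hkanti.antitoneOn hα₀
    (by linarith : (0 : ℝ) < β) ⟨zero_lt_one, le_rfl⟩ (show 0 < 4 * δ / k 1 by positivity) hc
    (show 0 < e from div_pos (by linarith) (by linarith)), self_mem_nhdsWithin]
    with ε htrack hε
  by_contra! hJ
  have hsolε := hsol ε hε
  have hJ₀ := hsolε.current_pos zero_le_one hε hk hα₀ (by linarith)
  have hρ₁ := abs_le.1 <| htrack (ρ ε) (ρ' ε) (J ε) hsolε
    (by rw [sub_mul, div_mul_cancel₀ _ hk₁.ne']; linarith)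
    (hentry _ _ hJ₀.le (by linarith) (hsolε.current_eq_left zero_le_one))
  have hβρ : 1 / 4 ≤ β * ρ ε 1 := by
    have : β * (1 / 2 - e) = 1 / 4 := by simp only [e]; field_simp; ring
    nlinarith [half_le_upperBranch (J := J ε) (c := k 1)]
  nlinarith [hsolε.current_eq_right zero_le_one]

theorem tendsto_current (hkc : ContinuousOn k (Icc 0 1)) (hk : ∀ x ∈ Icc (0 : ℝ) 1, 0 < k x)
    (hkanti : StrictAntiOn k (Icc 0 1)) (hα : rhoF k < α) (hβ : 1 / 2 < β)
    (hsol : ∀ ε > 0, IsClassicalSolution 1 ε α β k (ρ ε) (ρ' ε) (J ε)) :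
    Tendsto J (𝓝[>] 0) (𝓝 (k 1 / 4)) := by
  have hα₀ : 0 < α := pos_of_rhoF_lt hk hα
  refine tendsto_order.2 ⟨fun b hb => ?_, fun b hb => ?_⟩
  · filter_upwards [eventually_le_current hkc hk hkanti hα hβ hsol (half_pos (sub_pos.2 hb))]
      with ε hε
    linarith
  · filter_upwards [eventually_current_le (hkc 1 ⟨zero_le_one, le_rfl⟩) hk hα₀ (by linarith) hsol
      (half_pos (sub_pos.2 hb))] with ε hε
    linarith

theorem tendsto_sub_upperBranch (hkc : ContinuousOn k (Icc 0 1))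
    (hk : ∀ x ∈ Icc (0 : ℝ) 1, 0 < k x) (hkanti : StrictAntiOn k (Icc 0 1)) (hα : rhoF k < α)
    (hβ : 1 / 2 < β) (hsol : ∀ ε > 0, IsClassicalSolution 1 ε α β k (ρ ε) (ρ' ε) (J ε))
    {x : ℝ} (hx : x ∈ Ioo 0 1) :
    Tendsto (fun ε => ρ ε x - upperBranch (J ε) (k x)) (𝓝[>] 0) (𝓝 0) := by
  have hk₁ := hk 1 ⟨zero_le_one, le_rfl⟩
  have hkx := hk x ⟨hx.1.le, hx.2.le⟩
  have hk₁x : k 1 < k x := hkanti ⟨hx.1.le, hx.2.le⟩ ⟨zero_le_one, le_rfl⟩ hx.2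
  have hα₀ : 0 < α := pos_of_rhoF_lt hk hα
  obtain ⟨c, hc, Jm, hJm, hentry⟩ := exists_entry_margin hk₁
    (hkanti ⟨le_rfl, zero_le_one⟩ ⟨zero_le_one, le_rfl⟩ zero_lt_one) hα
  have hJ := tendsto_current hkc hk hkanti hα hβ hsol
  set g := (k x - k 1) / (2 * k x)
  have hgk : (1 - g) * k x = (k x + k 1) / 2 := by simp only [g]; field_simp; ring
  rw [Metric.tendsto_nhds]
  intro e he
  filter_upwards [eventually_abs_sub_upperBranch_le hkc hk hkanti.antitoneOn hα₀
    (by linarith : (0 : ℝ) < β) ⟨hx.1, hx.2.le⟩ (show 0 < g by positivity) hc (half_pos he),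
    hJ.eventually (gt_mem_nhds (show k 1 / 4 < (k x + k 1) / 8 by linarith)),
    hJ.eventually (gt_mem_nhds hJm), self_mem_nhdsWithin] with ε htrack hJg hJJm hε
  have hsolε := hsol ε hε
  rw [Real.dist_eq, sub_zero]
  refine (htrack _ _ _ hsolε (by linarith) (hentry _ _ ?_ hJJm.le ?_)).trans_lt (half_lt_self he)
  · exact (hsolε.current_pos zero_le_one hε hk hα₀ (by linarith)).le
  · exact hsolε.current_eq_left zero_le_one

end Family

theorem vanishing_viscosity_region34_interior_general
    (α β : ℝ) (k k' : ℝ → ℝ) (ρ ρ' : ℝ → ℝ → ℝ) (J : ℝ → ℝ)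
    (hk : ∀ x ∈ Icc (0:ℝ) 1, HasDerivWithinAt k (k' x) (Icc 0 1) x)
    (hkpos : ∀ x ∈ Icc (0:ℝ) 1, 0 < k x)
    (hk'neg : ∀ x ∈ Icc (0:ℝ) 1, k' x < 0)
    (hα0 : rhoF k < α)
    (hβ1 : 1/2 < β)
    (hsol : ∀ ε > 0, IsClassicalSolution 1 ε α β k (ρ ε) (ρ' ε) (J ε)) :
    ∀ x ∈ Ioo (0:ℝ) 1,
      Tendsto (fun ε => ρ ε x) (nhdsWithin 0 (Ioi 0))
        (nhds ((1/2) * (1 + Real.sqrt (1 - k 1 / k x)))) := by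
  intro x hx
  have hkc : ContinuousOn k (Icc 0 1) := fun y hy => (hk y hy).continuousWithinAt
  have hanti : StrictAntiOn k (Icc 0 1) := strictAntiOn_of_hasDerivWithinAt_neg (convex_Icc 0 1)
    hkc (fun y hy => (hk y (interior_subset hy)).mono interior_subset)
    (fun y hy => hk'neg y (interior_subset hy))
  have hbranch := ((continuous_upperBranch (k x)).tendsto _).comp
    (tendsto_current hkc hkpos hanti hα0 hβ1 hsol)
  have hlimit : upperBranch (k 1 / 4) (k x) = (1/2) * (1 + Real.sqrt (1 - k 1 / k x)) := by
    rw [upperBranch]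
    ring_nf
  rw [← hlimit]
  simpa using (tendsto_sub_upperBranch hkc hkpos hanti hα0 hβ1 hsol hx).add hbranch

/-- Vanishing-viscosity pointwise limit of the density in region G₃ ∪ G₄:
in the interior the profile follows the attracting branch of the critical manifold. -/
theorem vanishing_viscosity_region34_interior
    (α β : ℝ) (k k' : ℝ → ℝ) (ρ ρ' : ℝ → ℝ → ℝ) (J : ℝ → ℝ)
    (hk : ∀ x ∈ Icc (0:ℝ) 1, HasDerivWithinAt k (k' x) (Icc 0 1) x)
    (hk'c : ContinuousOn k' (Icc 0 1))
    (hkpos : ∀ x ∈ Icc (0:ℝ) 1, 0 < k x)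
    (hk'neg : ∀ x ∈ Icc (0:ℝ) 1, k' x < 0)
    (hα0 : rhoF k < α) (hα1 : α < 1) (hαne : α ≠ 1 - rhoF k)
    (hβ1 : 1/2 < β) (hβ2 : β < 1)
    (hsol : ∀ ε > 0, IsClassicalSolution 1 ε α β k (ρ ε) (ρ' ε) (J ε)) :
    ∀ x ∈ Ioo (0:ℝ) 1,
      Tendsto (fun ε => ρ ε x) (nhdsWithin 0 (Ioi 0))
        (nhds ((1/2) * (1 + Real.sqrt (1 - k 1 / k x)))) :=
  vanishing_viscosity_region34_interior_general α β k k' ρ ρ' J hk hkpos hk'neg hα0 hβ1 hsol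
end

section
/- Assume 0 < β < 1/2, α > 1 − ρ_*(β) and α ≠ ρ_*(β). Suppose that for every ε > 0, (ρ_ε, J_ε) is a classical solution of the area-averaged pedestrian boundary value problem on [0,1] with diffusion ε. Then, as ε → 0⁺, J_ε → β·(1−β)·k(1), ρ_ε(0) → 1 − β·(1−β)·k(1)/(α·k(0)), and ρ_ε(1) → 1 − β. -/
/-!
Write the equation as `ε ρ' = ρ (1 - ρ) - J / k x`. The boundary conditions give
`J = β k(1) ρ(1) = α k(0) (1 - ρ(0))`, so everything follows from `ρ_ε(1) → 1 - β`, which is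
proved by fencing (barrier) arguments.

If `ρ(1) ≥ 1 - β + δ`, then near `x = 1`, where `k(1) / k(x) ≈ 1`, every point with `ρ ≥ ρ(1)`
has `ε ρ' ≤ -δ/4`; going left from `x = 1` the solution therefore climbs with slope `≳ δ/ε`
and exceeds `1`, which the barrier `ρ ≤ 1` forbids.

If `ρ(1) ≤ 1 - β - δ`, then `J / k ≤ β (1 - β - δ)` on `[0, 1]` because `k` decreases.
Let `r(x) = lowerRoot (J / k x)`, the smaller root of `t (1 - t) = J / k(x)`. The condition
`α > 1 - ρ_*(β)` puts `ρ(0)` at least `η/2` above `r(0)`; the moving barrier `r + η/2` cannot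
be crossed, because `r' = O(1)` while `ε ρ' ≳ η` on contact; and the level `1 - β - δ/2` is
never reached, since `ρ(1)` lies below it. Between the two barriers `ε ρ' ≳ η δ`, so `ρ`
would increase by more than `1` across `[0, 1]`.
-/

open Set Filter

open Topology

section Fencing

variable {f g f' g' : ℝ → ℝ} {a b : ℝ}

theorem image_le_of_deriv_lt_deriv_boundary_Icc
    (hf : ∀ x ∈ Icc a b, HasDerivWithinAt f (f' x) (Icc a b) x)
    (hg : ∀ x ∈ Icc a b, HasDerivWithinAt g (g' x) (Icc a b) x)
    (ha : f a ≤ g a) (contact : ∀ x ∈ Ico a b, f x = g x → f' x < g' x) :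
    ∀ x ∈ Icc a b, f x ≤ g x :=
  image_le_of_deriv_right_lt_deriv_boundary' (fun x hx => (hf x hx).continuousWithinAt)
    (fun x hx => (hf x (Ico_subset_Icc_self hx)).mono_of_mem_nhdsWithin
      (Icc_mem_nhdsGE_of_mem hx)) ha
    (fun x hx => (hg x hx).continuousWithinAt)
    (fun x hx => (hg x (Ico_subset_Icc_self hx)).mono_of_mem_nhdsWithin
      (Icc_mem_nhdsGE_of_mem hx)) contact

theorem image_le_of_deriv_gt_deriv_boundary_Icc_rev
    (hf : ∀ x ∈ Icc a b, HasDerivWithinAt f (f' x) (Icc a b) x)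
    (hg : ∀ x ∈ Icc a b, HasDerivWithinAt g (g' x) (Icc a b) x)
    (hb : f b ≤ g b) (contact : ∀ x ∈ Ioc a b, f x = g x → g' x < f' x) :
    ∀ x ∈ Icc a b, f x ≤ g x := by
  have mem {y : ℝ} (hy : y ∈ Icc (-b) (-a)) : -y ∈ Icc a b := ⟨le_neg.mpr hy.2, neg_le.mpr hy.1⟩
  have reflect {h h' : ℝ → ℝ} (hh : ∀ x ∈ Icc a b, HasDerivWithinAt h (h' x) (Icc a b) x)
      (y : ℝ) (hy : y ∈ Icc (-b) (-a)) :
      HasDerivWithinAt (fun y => h (-y)) (-h' (-y)) (Icc (-b) (-a)) y := by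
    simpa [Function.comp_def] using
      (hh (-y) (mem hy)).comp y (hasDerivWithinAt_neg y _) fun z hz => mem hz
  intro x hx
  simpa using image_le_of_deriv_lt_deriv_boundary_Icc (reflect hf) (reflect hg)
    (by simpa using hb)
    (fun y hy h => neg_lt_neg (contact (-y) ⟨lt_neg.mp hy.2, neg_le.mp hy.1⟩ h))
    (-x) ⟨neg_le_neg hx.2, neg_le_neg hx.1⟩

end Fencing

theorem add_mul_sub_le_of_lt_deriv {f f' : ℝ → ℝ} {a b c : ℝ} (hab : a ≤ b)
    (hf : ∀ x ∈ Icc a b, HasDerivWithinAt f (f' x) (Icc a b) x) (hc : ∀ x ∈ Ico a b, c < f' x) :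
    f a + c * (b - a) ≤ f b := by
  have line (x : ℝ) : HasDerivWithinAt (fun x => f a + c * (x - a)) c (Icc a b) x := by
    simpa using (((hasDerivWithinAt_id x _).sub_const a).const_mul c).const_add (f a)
  simpa using image_le_of_deriv_lt_deriv_boundary_Icc (fun x _ => line x) hf (by simp)
    (fun x hx _ => hc x hx) b ⟨hab, le_rfl⟩

noncomputable def lowerRoot (p : ℝ) : ℝ := (1 - √(1 - 4 * p)) / 2

theorem lowerRoot_mul_one_sub {p : ℝ} (hp : p ≤ 1 / 4) : lowerRoot p * (1 - lowerRoot p) = p := by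
  have := Real.sq_sqrt (show 0 ≤ 1 - 4 * p by linarith)
  unfold lowerRoot
  linear_combination (-1 / 4 : ℝ) * this

theorem one_sub_two_mul_lowerRoot (p : ℝ) : 1 - 2 * lowerRoot p = √(1 - 4 * p) := by
  unfold lowerRoot; ring

theorem lowerRoot_mono : Monotone lowerRoot := fun p q hpq => by
  unfold lowerRoot
  gcongr

theorem lowerRoot_nonneg {p : ℝ} (hp : 0 ≤ p) : 0 ≤ lowerRoot p := by
  simpa [lowerRoot] using lowerRoot_mono hp

theorem lowerRoot_mul_one_sub_self {b : ℝ} (hb : b ≤ 1 / 2) : lowerRoot (b * (1 - b)) = b := by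
  rw [lowerRoot, show 1 - 4 * (b * (1 - b)) = (1 - 2 * b) ^ 2 by ring,
    Real.sqrt_sq (by linarith)]
  ring

theorem hasDerivAt_lowerRoot {p : ℝ} (hp : p < 1 / 4) :
    HasDerivAt lowerRoot (√(1 - 4 * p))⁻¹ p := by
  have hs : 0 < 1 - 4 * p := by linarith
  refine ((((hasDerivAt_id' p).const_mul 4).const_sub 1).sqrt hs.ne').const_sub 1
    |>.div_const 2 |>.congr_deriv ?_
  field_simp [(Real.sqrt_pos.mpr hs).ne']
  ring

theorem one_sub_rhoStarLow (β : ℝ) (k : ℝ → ℝ) :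
    1 - rhoStarLow β k = lowerRoot (β * (1 - β) * k 1 / k 0) := by
  rw [rhoStarLow, lowerRoot]
  ring_nf

theorem sub_lowerRoot_le_two_mul {α p ρ₀ : ℝ} (hα0 : 0 < α) (hα1 : α ≤ 1) (hp : p ≤ 1 / 4)
    (hpα : lowerRoot p ≤ α) (hρ₀ : p = α * (1 - ρ₀)) :
    α - lowerRoot p ≤ 2 * (ρ₀ - lowerRoot p) := by
  have hr := lowerRoot_mul_one_sub hp
  have hr_le : lowerRoot p ≤ 1 / 2 := by
    have := one_sub_two_mul_lowerRoot p; have := Real.sqrt_nonneg (1 - 4 * p); linarith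
  -- `α (ρ₀ - r) = (1 - r) (α - r)` with `r = lowerRoot p`
  nlinarith [mul_le_mul_of_nonneg_right (show α ≤ 2 * (1 - lowerRoot p) by linarith)
    (sub_nonneg.mpr hpα)]

theorem neg_mul_div_sq_le {J k₁ κ κ' M : ℝ} (hJ : 0 ≤ J) (hJk : 4 * J ≤ k₁) (hk₁ : 0 < k₁)
    (hκ : k₁ ≤ κ) (hκ' : |κ'| ≤ M) : -(J * κ') / κ ^ 2 ≤ M / (4 * k₁) := by
  have hM : 0 ≤ M := (abs_nonneg _).trans hκ'
  calc -(J * κ') / κ ^ 2 ≤ J * M / k₁ ^ 2 := by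
        gcongr
        nlinarith [neg_le_of_abs_le hκ']
    _ ≤ k₁ / 4 * M / k₁ ^ 2 := by gcongr; linarith
    _ = M / (4 * k₁) := by field_simp

namespace IsClassicalSolution

variable {L ε α β J : ℝ} {k ρ ρ' : ℝ → ℝ}

theorem flux_eq_left (hs : IsClassicalSolution L ε α β k ρ ρ' J) (hL : 0 ≤ L) :
    J = α * k 0 * (1 - ρ 0) := by
  have h := hs.2.2.1 0 ⟨le_rfl, hL⟩
  rw [hs.2.2.2.1] at h
  rw [← h]; ring

theorem flux_eq_right (hs : IsClassicalSolution L ε α β k ρ ρ' J) (hL : 0 ≤ L) :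
    J = β * k L * ρ L := by
  have h := hs.2.2.1 L ⟨hL, le_rfl⟩
  rw [hs.2.2.2.2] at h
  rw [← h]; ring

theorem eps_mul_deriv_eq (hs : IsClassicalSolution L ε α β k ρ ρ' J)
    (hk : ∀ x ∈ Icc 0 L, 0 < k x) {x : ℝ} (hx : x ∈ Icc 0 L) :
    ε * ρ' x = ρ x * (1 - ρ x) - J / k x := by
  rw [← hs.2.2.1 x hx, mul_div_cancel_left₀ _ (hk x hx).ne']
  ring

theorem le_rho_right_of_le (hs : IsClassicalSolution L ε α β k ρ ρ' J) (hε : 0 < ε)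
    (hk : ∀ x ∈ Icc 0 L, 0 < k x) {c z : ℝ} (hc : ∀ x ∈ Icc 0 L, J / k x < c * (1 - c))
    (hz : z ∈ Icc 0 L) (hcz : c ≤ ρ z) : c ≤ ρ L := by
  have sub : Icc z L ⊆ Icc 0 L := Icc_subset_Icc_left hz.1
  refine image_le_of_deriv_lt_deriv_boundary_Icc (fun x _ => hasDerivWithinAt_const x _ c)
    (fun x hx => (hs.1 x (sub hx)).mono sub) hcz (fun x hx hx_eq => ?_) L ⟨hz.2, le_rfl⟩
  have hx := sub (Ico_subset_Icc_self hx)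
  have h := hs.eps_mul_deriv_eq hk hx
  rw [← hx_eq] at h
  exact pos_of_mul_pos_right (by linarith [hc x hx]) hε.le

theorem flux_pos (hs : IsClassicalSolution L ε α β k ρ ρ' J) (hL : 0 ≤ L) (hε : 0 < ε)
    (hα : 0 < α) (hβ : 0 < β) (hk : ∀ x ∈ Icc 0 L, 0 < k x) : 0 < J := by
  by_contra! hJ
  have hρ0 : 1 ≤ ρ 0 := by nlinarith [hs.flux_eq_left hL, mul_pos hα (hk 0 ⟨le_rfl, hL⟩)]
  have hρL : ρ L ≤ 0 := by nlinarith [hs.flux_eq_right hL, mul_pos hβ (hk L ⟨hL, le_rfl⟩)]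
  have := hs.le_rho_right_of_le hε hk (c := 1 / 2)
    (fun x hx => by linarith [div_nonpos_of_nonpos_of_nonneg hJ (hk x hx).le])
    ⟨le_rfl, hL⟩ (by linarith)
  linarith

theorem rho_le_one (hs : IsClassicalSolution L ε α β k ρ ρ' J) (hL : 0 ≤ L) (hε : 0 < ε)
    (hα : 0 < α) (hk : ∀ x ∈ Icc 0 L, 0 < k x) (hJ : 0 < J) : ∀ x ∈ Icc 0 L, ρ x ≤ 1 :=
  image_le_of_deriv_lt_deriv_boundary_Icc hs.1 (fun x _ => hasDerivWithinAt_const x _ 1)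
    (by nlinarith [hs.flux_eq_left hL, mul_pos hα (hk 0 ⟨le_rfl, hL⟩)]) fun x hx hx_eq => by
      have hx := Ico_subset_Icc_self hx
      have h := hs.eps_mul_deriv_eq hk hx
      rw [hx_eq] at h
      exact neg_of_mul_neg_right (by linarith [div_pos hJ (hk x hx)]) hε.le

theorem lowerRoot_add_half_le_rho (hs : IsClassicalSolution L ε α β k ρ ρ' J) (hε : 0 < ε)
    (hk : ∀ x ∈ Icc 0 L, 0 < k x) {k' : ℝ → ℝ}
    (hk' : ∀ x ∈ Icc 0 L, HasDerivWithinAt k (k' x) (Icc 0 L) x) {b η D : ℝ} (hb : b < 1 / 2)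
    (hp : ∀ x ∈ Icc 0 L, J / k x ≤ b * (1 - b)) (hD0 : 0 ≤ D)
    (hD : ∀ x ∈ Icc 0 L, -(J * k' x) / k x ^ 2 ≤ D) (hηb : η ≤ 1 - 2 * b)
    (hεD : 4 * ε * D < η * (1 - 2 * b) ^ 2) (h0 : lowerRoot (J / k 0) + η / 2 ≤ ρ 0) :
    ∀ x ∈ Icc 0 L, lowerRoot (J / k x) + η / 2 ≤ ρ x := by
  have hγ : 0 < 1 - 2 * b := by linarith
  have hη : 0 < η :=
    pos_of_mul_pos_left ((by positivity : 0 ≤ 4 * ε * D).trans_lt hεD) (by positivity)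
  have hp4 (x) (hx : x ∈ Icc 0 L) : J / k x < 1 / 4 := by nlinarith [hp x hx]
  have barrier (x) (hx : x ∈ Icc 0 L) : HasDerivWithinAt (fun x => lowerRoot (J / k x) + η / 2)
      ((√(1 - 4 * (J / k x)))⁻¹ * (-(J * k' x) / k x ^ 2)) (Icc 0 L) x := by
    have hpd : HasDerivWithinAt (fun x => J / k x) (-(J * k' x) / k x ^ 2) (Icc 0 L) x :=
      ((hasDerivWithinAt_const x _ J).div (hk' x hx) (hk x hx).ne').congr_deriv (by ring)
    exact ((hasDerivAt_lowerRoot (hp4 x hx)).comp_hasDerivWithinAt x hpd).add_const _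
  refine image_le_of_deriv_lt_deriv_boundary_Icc barrier hs.1 h0 fun x hx hx_eq => ?_
  have hx := Ico_subset_Icc_self hx
  set r := lowerRoot (J / k x)
  have hr := lowerRoot_mul_one_sub (hp4 x hx).le
  have hrb : r ≤ b := (lowerRoot_mono (hp x hx)).trans_eq (lowerRoot_mul_one_sub_self hb.le)
  have hsqrt := one_sub_two_mul_lowerRoot (J / k x)
  have hsγ : 1 - 2 * b ≤ √(1 - 4 * (J / k x)) := by linarith
  have barrier_slope : (√(1 - 4 * (J / k x)))⁻¹ * (-(J * k' x) / k x ^ 2) ≤ D / (1 - 2 * b) := by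
    rw [inv_mul_eq_div]
    exact div_le_div₀ hD0 (hD x hx) hγ hsγ
  have rho_slope : η * (1 - 2 * b) / 4 ≤ ε * ρ' x := by
    rw [hs.eps_mul_deriv_eq hk hx, ← hx_eq]
    nlinarith
  have : ε * (D / (1 - 2 * b)) < η * (1 - 2 * b) / 4 := by
    rw [mul_div_assoc', div_lt_div_iff₀ hγ (by norm_num)]; nlinarith
  nlinarith

theorem flux_div_le (hs : IsClassicalSolution L ε α β k ρ ρ' J) (hL : 0 ≤ L)
    (hk : ∀ x ∈ Icc 0 L, 0 < k x) (hk_ge : ∀ x ∈ Icc 0 L, k L ≤ k x) (hJ : 0 ≤ J) (hβ : 0 ≤ β)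
    {m : ℝ} (hρ : ρ L ≤ m) {x : ℝ} (hx : x ∈ Icc 0 L) : J / k x ≤ β * m :=
  calc J / k x ≤ J / k L := div_le_div_of_nonneg_left hJ (hk L ⟨hL, le_rfl⟩) (hk_ge x hx)
    _ = β * ρ L := by rw [hs.flux_eq_right hL, mul_right_comm, mul_div_cancel_right₀ _
        (hk L ⟨hL, le_rfl⟩).ne']
    _ ≤ β * m := mul_le_mul_of_nonneg_left hρ hβ

theorem eps_mul_deriv_ge (hs : IsClassicalSolution L ε α β k ρ ρ' J)
    (hk : ∀ x ∈ Icc 0 L, 0 < k x) {x : ℝ} (hx : x ∈ Icc 0 L) {b η δ : ℝ} (hb : b ≤ 1 / 2)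
    (hp : J / k x ≤ b * (1 - b)) (hη : 0 ≤ η) (hδ : 0 ≤ δ)
    (hlow : lowerRoot (J / k x) + η / 2 ≤ ρ x) (hhigh : ρ x ≤ 1 - b - δ / 2) :
    η * δ / 4 ≤ ε * ρ' x := by
  set r := lowerRoot (J / k x)
  have hr := lowerRoot_mul_one_sub (hp.trans (by nlinarith [sq_nonneg (1 - 2 * b)]))
  have hrb : r ≤ b := (lowerRoot_mono hp).trans_eq (lowerRoot_mul_one_sub_self hb)
  calc η * δ / 4 = η / 2 * (δ / 2) := by ring
    _ ≤ (ρ x - r) * (1 - r - ρ x) :=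
      mul_le_mul (by linarith) (by linarith) (by positivity) (by linarith)
    _ = ε * ρ' x := by rw [hs.eps_mul_deriv_eq hk hx, ← hr]; ring

theorem rho_one_lt (hs : IsClassicalSolution 1 ε α β k ρ ρ' J) (hε : 0 < ε) (hα : 0 < α)
    (hβ0 : 0 < β) (hβ : β ≤ 1 / 2) (hk : ∀ x ∈ Icc 0 1, 0 < k x) {δ ℓ : ℝ} (hδ : 0 < δ)
    (hℓ : ℓ ∈ Ioc 0 1) (hkℓ : ∀ x ∈ Icc (1 - ℓ) 1, 1 - δ / 4 ≤ k 1 / k x)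
    (hεℓ : 8 * ε ≤ δ * ℓ) : ρ 1 < 1 - β + δ := by
  by_contra! hρ1
  have hle := hs.rho_le_one zero_le_one hε hα hk (hs.flux_pos zero_le_one hε hα hβ0 hk)
  have hρ1_le := hle 1 ⟨zero_le_one, le_rfl⟩
  have sub_Icc : Icc (1 - ℓ) 1 ⊆ Icc 0 1 := Icc_subset_Icc_left (by linarith [hℓ.2])
  set c := δ / (8 * ε)
  have hc : 1 ≤ c * ℓ := by
    rw [div_mul_eq_mul_div, le_div_iff₀ (by positivity)]; linarith
  -- `t ↦ t (1 - t)` decreases on `[ρ 1, ∞)` as `ρ 1 > 1/2`, and `k 1 / k x ≥ 1 - δ/4` on the strip.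
  have steep : ∀ x ∈ Icc (1 - ℓ) 1, ρ 1 ≤ ρ x → ρ' x < -c := by
    intro x hx hρx
    have hJk : J / k x = β * ρ 1 * (k 1 / k x) := by
      rw [hs.flux_eq_right zero_le_one]; ring
    have logistic_le : ρ x * (1 - ρ x) ≤ ρ 1 * (1 - ρ 1) := by nlinarith
    have flux_ge : β * ρ 1 * (1 - δ / 4) ≤ β * ρ 1 * (k 1 / k x) :=
      mul_le_mul_of_nonneg_left (hkℓ x hx) (mul_nonneg hβ0.le (by linarith))
    have : ε * ρ' x < ε * -c := by
      have : ε * -c = -(δ / 8) := by simp only [c]; field_simp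
      rw [hs.eps_mul_deriv_eq hk (sub_Icc hx), hJk, this]
      nlinarith [mul_le_mul_of_nonneg_left (show 1 - ρ 1 - β ≤ -δ by linarith)
        (show 0 ≤ ρ 1 by linarith), mul_pos hδ hβ0]
    exact lt_of_mul_lt_mul_left this hε.le
  have above := image_le_of_deriv_gt_deriv_boundary_Icc_rev (f := fun x => ρ 1 + c * (1 - x))
    (f' := fun _ => -c) (fun x _ => by simpa using
      (((hasDerivWithinAt_id x _).const_sub 1).const_mul c).const_add (ρ 1))
    (fun x hx => (hs.1 x (sub_Icc hx)).mono sub_Icc) (by simp)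
    (fun x hx hx_eq => steep x (Ioc_subset_Icc_self hx) (by
      nlinarith [hx.2, show 0 ≤ c by positivity]))
    (1 - ℓ) ⟨le_rfl, by linarith [hℓ.1]⟩
  have := hle (1 - ℓ) (sub_Icc ⟨le_rfl, by linarith [hℓ.1]⟩)
  simp only [sub_sub_cancel] at above
  linarith

theorem lowerRoot_add_half_le_rho_zero (hs : IsClassicalSolution 1 ε α β k ρ ρ' J) (hα0 : 0 < α)
    (hα : 1 - rhoStarLow β k < α) (hα1 : α ≤ 1) (hk0 : 0 < k 0) (hp0 : J / k 0 ≤ 1 / 4)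
    (hJ : J ≤ β * (1 - β) * k 1) {η : ℝ} (hηα : η ≤ α - (1 - rhoStarLow β k)) :
    lowerRoot (J / k 0) + η / 2 ≤ ρ 0 := by
  have hr0 : lowerRoot (J / k 0) ≤ 1 - rhoStarLow β k := by
    rw [one_sub_rhoStarLow]
    exact lowerRoot_mono (div_le_div_of_nonneg_right hJ hk0.le)
  have := sub_lowerRoot_le_two_mul (ρ₀ := ρ 0) hα0 hα1 hp0 (by linarith)
    (by rw [hs.flux_eq_left zero_le_one]; field_simp)
  linarith

theorem one_sub_sub_lt_rho_one (hs : IsClassicalSolution 1 ε α β k ρ ρ' J) (hε : 0 < ε)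
    (hα0 : 0 < α) (hα : 1 - rhoStarLow β k < α) (hα1 : α ≤ 1) (hβ0 : 0 < β) (hβ : β < 1 / 2)
    (hk : ∀ x ∈ Icc 0 1, 0 < k x) (hk_ge : ∀ x ∈ Icc 0 1, k 1 ≤ k x) {k' : ℝ → ℝ}
    (hk' : ∀ x ∈ Icc 0 1, HasDerivWithinAt k (k' x) (Icc 0 1) x) {M : ℝ}
    (hM : ∀ x ∈ Icc 0 1, |k' x| ≤ M) {δ η : ℝ} (hδ : 0 < δ) (hδ1 : δ ≤ 1)
    (hηβ : η ≤ 1 - 2 * β) (hηα : η ≤ α - (1 - rhoStarLow β k))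
    (hεM : M * ε < η * (1 - 2 * β) ^ 2 * k 1) (hεδ : 8 * ε ≤ η * δ) : 1 - β - δ < ρ 1 := by
  by_contra! hρ1
  have hη : 0 < η := pos_of_mul_pos_left ((by positivity : 0 < 8 * ε).trans_le hεδ) hδ.le
  have mem0 : (0 : ℝ) ∈ Icc 0 1 := ⟨le_rfl, zero_le_one⟩
  have mem1 : (1 : ℝ) ∈ Icc 0 1 := ⟨zero_le_one, le_rfl⟩
  have hk1 := hk 1 mem1
  have hJ := hs.flux_pos zero_le_one hε hα0 hβ0 hk
  have hp (x) (hx : x ∈ Icc 0 1) := hs.flux_div_le zero_le_one hk hk_ge hJ.le hβ0.le hρ1 hx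
  have hpβ (x) (hx : x ∈ Icc 0 1) : J / k x ≤ β * (1 - β) := (hp x hx).trans (by nlinarith)
  have hJ_le : J ≤ β * (1 - β) * k 1 := (div_le_iff₀ hk1).mp (hpβ 1 mem1)
  have hβ4 : β * (1 - β) ≤ 1 / 4 := by nlinarith [sq_nonneg (1 - 2 * β)]
  have start := hs.lowerRoot_add_half_le_rho_zero hα0 hα hα1 (hk 0 mem0) ((hpβ 0 mem0).trans hβ4)
    hJ_le hηα
  have hεD : 4 * ε * (M / (4 * k 1)) < η * (1 - 2 * β) ^ 2 := by
    rw [show 4 * ε * (M / (4 * k 1)) = M * ε / k 1 by field_simp, div_lt_iff₀ hk1]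
    linarith
  have lower := hs.lowerRoot_add_half_le_rho hε hk hk' hβ hpβ
    (div_nonneg ((abs_nonneg _).trans (hM 0 mem0)) (by positivity))
    (fun x hx => neg_mul_div_sq_le hJ.le (by nlinarith) hk1 (hk_ge x hx) (hM x hx)) hηβ hεD start
  have below (x) (hx : x ∈ Icc 0 1) : ρ x < 1 - β - δ / 2 := by
    by_contra! h
    have := hs.le_rho_right_of_le hε hk (fun y hy => (hp y hy).trans_lt (by nlinarith)) hx h
    linarith
  have speed (x) (hx : x ∈ Ico 0 1) : η * δ / (8 * ε) < ρ' x := by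
    have hx := Ico_subset_Icc_self hx
    have := hs.eps_mul_deriv_ge hk hx hβ.le (hpβ x hx) hη.le hδ.le (lower x hx) (below x hx).le
    rw [div_lt_iff₀' (by positivity)]
    nlinarith [mul_pos hη hδ]
  have climb := add_mul_sub_le_of_lt_deriv zero_le_one hs.1 speed
  have : 1 ≤ η * δ / (8 * ε) := by rw [le_div_iff₀ (by positivity)]; linarith
  have := lowerRoot_nonneg (div_pos hJ (hk 0 mem0)).le
  nlinarith [lower 0 mem0, below 1 mem1]

end IsClassicalSolution

theorem eventually_mul_lt_nhdsGT_zero {c : ℝ} (hc : 0 < c) (C : ℝ) :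
    ∀ᶠ ε in 𝓝[>] (0 : ℝ), C * ε < c := by
  have : Tendsto (fun ε : ℝ => C * ε) (𝓝 0) (𝓝 0) :=
    (continuous_const.mul continuous_id).tendsto' 0 0 (mul_zero C)
  exact nhdsWithin_le_nhds (this.eventually (gt_mem_nhds hc))

section Family

variable {α β : ℝ} {k : ℝ → ℝ} {ρ ρ' : ℝ → ℝ → ℝ} {J : ℝ → ℝ}

theorem eventually_rho_one_lt (hsol : ∀ ε > 0, IsClassicalSolution 1 ε α β k (ρ ε) (ρ' ε) (J ε))
    (hα : 0 < α) (hβ0 : 0 < β) (hβ : β ≤ 1 / 2) (hk : ∀ x ∈ Icc 0 1, 0 < k x)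
    (hkc : ContinuousWithinAt k (Icc 0 1) 1) {δ : ℝ} (hδ : 0 < δ) :
    ∀ᶠ ε in 𝓝[>] 0, ρ ε 1 < 1 - β + δ := by
  have hk1 := hk 1 ⟨zero_le_one, le_rfl⟩
  have hev : ∀ᶠ x in 𝓝[≤] (1 : ℝ), 1 - δ / 4 < k 1 / k x := by
    rw [← nhdsWithin_Icc_eq_nhdsLE zero_lt_one]
    have : ContinuousWithinAt (fun x => k 1 / k x) (Icc 0 1) 1 :=
      continuousWithinAt_const.div hkc hk1.ne'
    refine this.eventually (lt_mem_nhds ?_)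
    simp only [div_self hk1.ne']; linarith
  obtain ⟨l, hl, hsub⟩ := mem_nhdsLE_iff_exists_Icc_subset.mp hev
  have hℓ : min (1 - l) 1 ∈ Ioc 0 1 := ⟨lt_min (by linarith) one_pos, min_le_right _ _⟩
  filter_upwards [self_mem_nhdsWithin, eventually_mul_lt_nhdsGT_zero (mul_pos hδ hℓ.1) 8]
    with ε hε hεℓ
  refine (hsol ε hε).rho_one_lt hε hα hβ0 hβ hk hδ hℓ (fun x hx => (hsub ⟨?_, hx.2⟩).le) hεℓ.le
  linarith [hx.1, min_le_left (1 - l) 1]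

theorem eventually_one_sub_sub_lt_rho_one
    (hsol : ∀ ε > 0, IsClassicalSolution 1 ε α β k (ρ ε) (ρ' ε) (J ε)) (hα0 : 0 < α)
    (hα : 1 - rhoStarLow β k < α) (hα1 : α ≤ 1) (hβ0 : 0 < β) (hβ : β < 1 / 2)
    (hk : ∀ x ∈ Icc 0 1, 0 < k x) (hk_ge : ∀ x ∈ Icc 0 1, k 1 ≤ k x) {k' : ℝ → ℝ}
    (hk' : ∀ x ∈ Icc 0 1, HasDerivWithinAt k (k' x) (Icc 0 1) x) {M : ℝ}
    (hM : ∀ x ∈ Icc 0 1, |k' x| ≤ M) {δ : ℝ} (hδ : 0 < δ) (hδ1 : δ ≤ 1) :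
    ∀ᶠ ε in 𝓝[>] 0, 1 - β - δ < ρ ε 1 := by
  obtain ⟨η, hη, hηβ, hηα⟩ : ∃ η, 0 < η ∧ η ≤ 1 - 2 * β ∧ η ≤ α - (1 - rhoStarLow β k) :=
    ⟨_, lt_min (by linarith) (by linarith), min_le_left _ _, min_le_right _ _⟩
  have hγ : 0 < η * (1 - 2 * β) ^ 2 * k 1 :=
    mul_pos (mul_pos hη (pow_pos (by linarith) 2)) (hk 1 ⟨zero_le_one, le_rfl⟩)
  filter_upwards [self_mem_nhdsWithin, eventually_mul_lt_nhdsGT_zero hγ M,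
    eventually_mul_lt_nhdsGT_zero (mul_pos hη hδ) 8] with ε hε hεM hεδ
  exact (hsol ε hε).one_sub_sub_lt_rho_one hε hα0 hα hα1 hβ0 hβ hk hk_ge hk' hM hδ hδ1 hηβ hηα
    hεM hεδ.le

theorem tendsto_rho_one (hsol : ∀ ε > 0, IsClassicalSolution 1 ε α β k (ρ ε) (ρ' ε) (J ε))
    (hα0 : 0 < α) (hα : 1 - rhoStarLow β k < α) (hα1 : α ≤ 1) (hβ0 : 0 < β) (hβ : β < 1 / 2)
    (hk : ∀ x ∈ Icc 0 1, 0 < k x) (hk_ge : ∀ x ∈ Icc 0 1, k 1 ≤ k x) {k' : ℝ → ℝ}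
    (hk' : ∀ x ∈ Icc 0 1, HasDerivWithinAt k (k' x) (Icc 0 1) x) {M : ℝ}
    (hM : ∀ x ∈ Icc 0 1, |k' x| ≤ M) : Tendsto (fun ε => ρ ε 1) (𝓝[>] 0) (𝓝 (1 - β)) := by
  refine tendsto_order.2 ⟨fun a ha => ?_, fun a ha => ?_⟩
  · filter_upwards [eventually_one_sub_sub_lt_rho_one hsol hα0 hα hα1 hβ0 hβ hk hk_ge hk' hM
      (lt_min (sub_pos.mpr ha) one_pos : 0 < min (1 - β - a) 1) (min_le_right _ 1)] with ε hε
    linarith [min_le_left (1 - β - a) 1]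
  · filter_upwards [eventually_rho_one_lt hsol hα0 hβ0 hβ.le hk
      (hk' 1 ⟨zero_le_one, le_rfl⟩).continuousWithinAt (sub_pos.mpr ha)] with ε hε
    linarith

end Family

theorem vanishing_viscosity_region56_boundary_general
    (α β : ℝ) (k k' : ℝ → ℝ) (ρ ρ' : ℝ → ℝ → ℝ) (J : ℝ → ℝ)
    (hk : ∀ x ∈ Icc (0:ℝ) 1, HasDerivWithinAt k (k' x) (Icc 0 1) x)
    (hk'c : ContinuousOn k' (Icc 0 1))
    (hkpos : ∀ x ∈ Icc (0:ℝ) 1, 0 < k x)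
    (hk'neg : ∀ x ∈ Icc (0:ℝ) 1, k' x < 0)
    (hβ0 : 0 < β) (hβ1 : β < 1/2)
    (hα0 : 1 - rhoStarLow β k < α) (hα1 : α < 1)
    (hsol : ∀ ε > 0, IsClassicalSolution 1 ε α β k (ρ ε) (ρ' ε) (J ε)) :
    Tendsto J (nhdsWithin 0 (Ioi 0)) (nhds (β * (1 - β) * k 1)) ∧
    Tendsto (fun ε => ρ ε 0) (nhdsWithin 0 (Ioi 0))
      (nhds (1 - β * (1 - β) * k 1 / (α * k 0))) ∧
    Tendsto (fun ε => ρ ε 1) (nhdsWithin 0 (Ioi 0)) (nhds (1 - β)) := by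
  have mem1 : (1 : ℝ) ∈ Icc 0 1 := ⟨zero_le_one, le_rfl⟩
  have hα : 0 < α := by
    refine (lowerRoot_nonneg ?_).trans_lt (one_sub_rhoStarLow β k ▸ hα0)
    exact div_nonneg (mul_pos (mul_pos hβ0 (by linarith)) (hkpos 1 mem1)).le
      (hkpos 0 ⟨le_rfl, zero_le_one⟩).le
  have hk_anti : AntitoneOn k (Icc 0 1) := by
    refine antitoneOn_of_hasDerivWithinAt_nonpos (f' := k') (convex_Icc 0 1)
      (fun x hx => (hk x hx).continuousWithinAt) (fun x hx => ?_) fun x hx => ?_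
    · rw [interior_Icc] at hx ⊢
      exact (hk x (Ioo_subset_Icc_self hx)).mono Ioo_subset_Icc_self
    · rw [interior_Icc] at hx
      exact (hk'neg x (Ioo_subset_Icc_self hx)).le
  obtain ⟨M, hM⟩ := isCompact_Icc.exists_bound_of_continuousOn hk'c
  have hρ1 := tendsto_rho_one hsol hα hα0 hα1.le hβ0 hβ1 hkpos (fun x hx => hk_anti hx mem1 hx.2)
    hk hM
  have hJ : Tendsto J (𝓝[>] 0) (𝓝 (β * (1 - β) * k 1)) := by
    refine (mul_right_comm β (1 - β) (k 1) ▸ hρ1.const_mul (β * k 1)).congr' ?_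
    filter_upwards [self_mem_nhdsWithin] with ε hε
    exact ((hsol ε hε).flux_eq_right zero_le_one).symm
  refine ⟨hJ, ((hJ.div_const (α * k 0)).const_sub 1).congr' ?_, hρ1⟩
  filter_upwards [self_mem_nhdsWithin] with ε hε
  have := hkpos 0 ⟨le_rfl, zero_le_one⟩
  rw [(hsol ε hε).flux_eq_left zero_le_one]
  field_simp
  ring

/-- Vanishing-viscosity limits of the flux and the boundary values in region G₅ ∪ G₆. -/
theorem vanishing_viscosity_region56_boundary
    (α β : ℝ) (k k' : ℝ → ℝ) (ρ ρ' : ℝ → ℝ → ℝ) (J : ℝ → ℝ)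
    (hk : ∀ x ∈ Icc (0:ℝ) 1, HasDerivWithinAt k (k' x) (Icc 0 1) x)
    (hk'c : ContinuousOn k' (Icc 0 1))
    (hkpos : ∀ x ∈ Icc (0:ℝ) 1, 0 < k x)
    (hk'neg : ∀ x ∈ Icc (0:ℝ) 1, k' x < 0)
    (hβ0 : 0 < β) (hβ1 : β < 1/2)
    (hα0 : 1 - rhoStarLow β k < α) (hα1 : α < 1) (hαne : α ≠ rhoStarLow β k)
    (hsol : ∀ ε > 0, IsClassicalSolution 1 ε α β k (ρ ε) (ρ' ε) (J ε)) :
    Tendsto J (nhdsWithin 0 (Ioi 0)) (nhds (β * (1 - β) * k 1)) ∧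
    Tendsto (fun ε => ρ ε 0) (nhdsWithin 0 (Ioi 0))
      (nhds (1 - β * (1 - β) * k 1 / (α * k 0))) ∧
    Tendsto (fun ε => ρ ε 1) (nhdsWithin 0 (Ioi 0)) (nhds (1 - β)) :=
  vanishing_viscosity_region56_boundary_general α β k k' ρ ρ' J hk hk'c hkpos hk'neg hβ0 hβ1 hα0 hα1
    hsol
end
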